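/- Suppose on an open set U ⊆ ℝⁿ \ {0} the maps θ ↦ a*(θ), θ ↦ ω*(θ) and θ ↦ Δ_θ := ∇²g(a*(θ)) are differentiable, where for each θ ∈ U: g(a*(θ)) = 0, ∇g(a*(θ)) = ω*(θ)·θ with ω*(θ) > 0, and Δ_θ is positive definite (hence invertible). Then the Jacobian of a* satisfies ∇a*(θ) = ω*(θ)·( Δ_θ⁻¹ − Δ_θ⁻¹ θ θᵀ Δ_θ⁻¹ / (θᵀ Δ_θ⁻¹ θ) ) for every θ ∈ U. -/

import Mathlib

/-!
Differentiating the identities `g (a* θ) = 0` and `∇g (a* θ) = ω* θ • θ` along `v` gives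
`⟪θ, ∇a*(θ) v⟫ = 0` and `Δ_θ (∇a*(θ) v) = (Dω*(θ) v) • θ + ω*(θ) • v`. Inverting `Δ_θ` in the second
identity and substituting into the first determines
`Dω*(θ) v = -ω*(θ) ⟪θ, Δ_θ⁻¹ v⟫ / ⟪θ, Δ_θ⁻¹ θ⟫`, the denominator being positive since `Δ_θ` is
positive definite.
-/

open RealInnerProductSpace Filter Topology

section

variable {E F : Type*} [NormedAddCommGroup E] [InnerProductSpace ℝ E]
  [NormedAddCommGroup F] [NormedSpace ℝ F]

theorem ContDiff.differentiable_gradient [CompleteSpace E] {g : E → ℝ} {n : WithTop ℕ∞}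
    (hg : ContDiff ℝ n g) (hn : 2 ≤ n) : Differentiable ℝ (gradient g) :=
  (InnerProductSpace.toDual ℝ E).symm.differentiable.comp
    ((hg.fderiv_right (m := 1) (by simpa [one_add_one_eq_two] using hn)).differentiable
      one_ne_zero)

theorem inner_gradient_fderiv_eq_zero_of_eventuallyEq_const [CompleteSpace E] {g : E → ℝ}
    {a : F → E} {x : F} {c : ℝ} (hg : DifferentiableAt ℝ g (a x)) (ha : DifferentiableAt ℝ a x)
    (hconst : g ∘ a =ᶠ[𝓝 x] fun _ => c) (v : F) :
    ⟪gradient g (a x), fderiv ℝ a x v⟫ = 0 := by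
  have h := congrArg (· v) ((fderiv_comp x hg ha).symm.trans hconst.fderiv_eq)
  simpa [inner_gradient_left] using h

theorem fderiv_apply_fderiv_of_eventuallyEq_smul_id {Φ : F → E} {a : E → F} {ω : E → ℝ}
    {θ : E} (hΦ : DifferentiableAt ℝ Φ (a θ)) (ha : DifferentiableAt ℝ a θ)
    (hω : DifferentiableAt ℝ ω θ) (heq : Φ ∘ a =ᶠ[𝓝 θ] fun x => ω x • x) (v : E) :
    fderiv ℝ Φ (a θ) (fderiv ℝ a θ v) = fderiv ℝ ω θ v • θ + ω θ • v := by
  have hderiv : fderiv ℝ (Φ ∘ a) θ = (fderiv ℝ ω θ).smulRight θ + ω θ • .id ℝ E := by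
    rw [heq.fderiv_eq, add_comm]
    exact (hω.hasFDerivAt.smul (hasFDerivAt_id θ)).fderiv
  simpa using congrArg (· v) ((fderiv_comp θ hΦ ha).symm.trans hderiv)

theorem inner_pos_of_apply_eq {H : E →ₗ[ℝ] E} (hpos : ∀ v, v ≠ 0 → 0 < ⟪H v, v⟫)
    {θ w : E} (hθ : θ ≠ 0) (hw : H w = θ) : 0 < ⟪θ, w⟫ := by
  have hw0 : w ≠ 0 := by rintro rfl; exact hθ (by simpa using hw.symm)
  simpa [hw] using hpos w hw0

theorem eq_smul_sub_of_apply_eq_of_inner_eq_zero {H : E → E} {Hinv : E →ₗ[ℝ] E}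
    (hinv : ∀ w, Hinv (H w) = w) {θ v x : E} {d ω : ℝ} (hc : ⟪θ, Hinv θ⟫ ≠ 0)
    (hx : H x = d • θ + ω • v) (horth : ⟪θ, x⟫ = 0) :
    x = ω • (Hinv v - ⟪θ, Hinv θ⟫⁻¹ • (⟪θ, Hinv v⟫ • Hinv θ)) := by
  have hx' : x = d • Hinv θ + ω • Hinv v := by rw [← hinv x, hx, map_add, map_smul, map_smul]
  have hd : d = -(ω * ⟪θ, Hinv v⟫) / ⟪θ, Hinv θ⟫ := by
    rw [hx', inner_add_right, real_inner_smul_right, real_inner_smul_right] at horth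
    field_simp
    linarith
  rw [hx', hd]
  match_scalars <;> field_simp

end

theorem fderiv_astar_closed_form_general {n : ℕ}
    (g : EuclideanSpace ℝ (Fin n) → ℝ) (hg : ContDiff ℝ 3 g)
    (U : Set (EuclideanSpace ℝ (Fin n))) (hU : IsOpen U) (hU0 : (0 : EuclideanSpace ℝ (Fin n)) ∉ U)
    (astar : EuclideanSpace ℝ (Fin n) → EuclideanSpace ℝ (Fin n))
    (ωstar : EuclideanSpace ℝ (Fin n) → ℝ)
    (hbdry : ∀ θ ∈ U, g (astar θ) = 0)
    (hωpos : ∀ θ ∈ U, 0 < ωstar θ)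
    (hgrad : ∀ θ ∈ U, gradient g (astar θ) = ωstar θ • θ)
    (H : EuclideanSpace ℝ (Fin n) → (EuclideanSpace ℝ (Fin n) →L[ℝ] EuclideanSpace ℝ (Fin n)))
    (hH : ∀ θ ∈ U, H θ = fderiv ℝ (gradient g) (astar θ))
    (hdiffa : DifferentiableOn ℝ astar U)
    (hdiffω : DifferentiableOn ℝ ωstar U)
    (hpos : ∀ θ ∈ U, ∀ v : EuclideanSpace ℝ (Fin n), v ≠ 0 → 0 < ⟪H θ v, v⟫)
    (Hinv : EuclideanSpace ℝ (Fin n) → (EuclideanSpace ℝ (Fin n) →L[ℝ] EuclideanSpace ℝ (Fin n)))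
    (hHinv : ∀ θ ∈ U, ∀ v, H θ (Hinv θ v) = v ∧ Hinv θ (H θ v) = v)
    (θ : EuclideanSpace ℝ (Fin n)) (hθU : θ ∈ U) :
    ∀ v : EuclideanSpace ℝ (Fin n),
      fderiv ℝ astar θ v =
        ωstar θ • (Hinv θ v - (⟪θ, Hinv θ θ⟫)⁻¹ • (⟪θ, Hinv θ v⟫ • Hinv θ θ)) := by
  intro v
  have hθ0 : θ ≠ 0 := fun h => hU0 (h ▸ hθU)
  have hUθ : U ∈ 𝓝 θ := hU.mem_nhds hθU
  have ha : DifferentiableAt ℝ astar θ := (hdiffa θ hθU).differentiableAt hUθ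
  have hω : DifferentiableAt ℝ ωstar θ := (hdiffω θ hθU).differentiableAt hUθ
  have horth : ⟪θ, fderiv ℝ astar θ v⟫ = 0 := by
    have h := inner_gradient_fderiv_eq_zero_of_eventuallyEq_const
      ((hg.differentiable (by norm_num)).differentiableAt) ha
      (eventuallyEq_of_mem hUθ hbdry) v
    rw [hgrad θ hθU, real_inner_smul_left] at h
    exact (mul_eq_zero.mp h).resolve_left (hωpos θ hθU).ne'
  have hlin : H θ (fderiv ℝ astar θ v) = fderiv ℝ ωstar θ v • θ + ωstar θ • v := by
    rw [hH θ hθU]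
    exact fderiv_apply_fderiv_of_eventuallyEq_smul_id
      ((hg.differentiable_gradient (by norm_num)).differentiableAt) ha hω
      (eventuallyEq_of_mem hUθ hgrad) v
  have hc : 0 < ⟪θ, Hinv θ θ⟫ :=
    inner_pos_of_apply_eq (H := (H θ).toLinearMap) (hpos θ hθU) hθ0 (hHinv θ hθU θ).1
  exact eq_smul_sub_of_apply_eq_of_inner_eq_zero (Hinv := (Hinv θ).toLinearMap)
    (fun w => (hHinv θ hθU w).2) hc.ne' hlin horth

/-- closed form for the Jacobian of the reward-maximizing action map.
On an open set `U ⊆ ℝⁿ \ {0}` on which `a*`, `ω*` and `Δ_θ = ∇²g(a*(θ))` are differentiable,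
with `g(a*(θ)) = 0`, `∇g(a*(θ)) = ω*(θ)θ`, `ω*(θ) > 0` and `Δ_θ` positive definite with
(two-sided) inverse `Hinv θ`, the Jacobian satisfies, for every direction `v`,
`∇a*(θ) v = ω*(θ)·(Δ_θ⁻¹ v − (θᵀΔ_θ⁻¹θ)⁻¹ · (θᵀΔ_θ⁻¹v) · Δ_θ⁻¹θ)`. -/
theorem fderiv_astar_closed_form {n : ℕ}
    (g : EuclideanSpace ℝ (Fin n) → ℝ) (hg : ContDiff ℝ 3 g)
    (κ : ℝ) (hκ : 0 < κ) (hsc : StrongConvexOn Set.univ κ g)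
    (hcompact : IsCompact {x : EuclideanSpace ℝ (Fin n) | g x ≤ 0})
    (U : Set (EuclideanSpace ℝ (Fin n))) (hU : IsOpen U) (hU0 : (0 : EuclideanSpace ℝ (Fin n)) ∉ U)
    (astar : EuclideanSpace ℝ (Fin n) → EuclideanSpace ℝ (Fin n))
    (ωstar : EuclideanSpace ℝ (Fin n) → ℝ)
    (hmem : ∀ θ ∈ U, g (astar θ) ≤ 0)
    (hmax : ∀ θ ∈ U, ∀ b, g b ≤ 0 → ⟪θ, b⟫ ≤ ⟪θ, astar θ⟫)
    (hbdry : ∀ θ ∈ U, g (astar θ) = 0)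
    (hωpos : ∀ θ ∈ U, 0 < ωstar θ)
    (hgrad : ∀ θ ∈ U, gradient g (astar θ) = ωstar θ • θ)
    (H : EuclideanSpace ℝ (Fin n) → (EuclideanSpace ℝ (Fin n) →L[ℝ] EuclideanSpace ℝ (Fin n)))
    (hH : ∀ θ ∈ U, H θ = fderiv ℝ (gradient g) (astar θ))
    (hdiffa : DifferentiableOn ℝ astar U)
    (hdiffω : DifferentiableOn ℝ ωstar U)
    (hdiffH : DifferentiableOn ℝ H U)
    (hpos : ∀ θ ∈ U, ∀ v : EuclideanSpace ℝ (Fin n), v ≠ 0 → 0 < ⟪H θ v, v⟫)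
    (Hinv : EuclideanSpace ℝ (Fin n) → (EuclideanSpace ℝ (Fin n) →L[ℝ] EuclideanSpace ℝ (Fin n)))
    (hHinv : ∀ θ ∈ U, ∀ v, H θ (Hinv θ v) = v ∧ Hinv θ (H θ v) = v)
    (θ : EuclideanSpace ℝ (Fin n)) (hθU : θ ∈ U) :
    ∀ v : EuclideanSpace ℝ (Fin n),
      fderiv ℝ astar θ v =
        ωstar θ • (Hinv θ v - (⟪θ, Hinv θ θ⟫)⁻¹ • (⟪θ, Hinv θ v⟫ • Hinv θ θ)) :=
  fderiv_astar_closed_form_general g hg U hU hU0 astar ωstar hbdry hωpos hgrad H hH hdiffa hdiffω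
    hpos Hinv hHinv θ hθU
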